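/- arXiv:2509.09648 — 2 statements merged into one kernel-verified Lean document; each statement's English description precedes it below -/
import Mathlib

section
/- There exist a constant C > 0 and p₀ > 1 such that for all p ≥ p₀ the derivative of u_p is uniformly bounded: sup_{t ∈ [-1,1]} |u_p'(t)| ≤ C. -/
open Real Set Filter Topology

noncomputable section

/-- `u` is the (unique) positive solution of the one-dimensional Lane–Emden problem
`-u'' = u^p` on `(-1,1)` with `u(-1) = u(1) = 0`; it is even, positive on `(-1,1)`,
decreasing on `[0,1]`, and its sup norm is attained at `0`. -/
def IsLaneEmden (p : ℝ) (u : ℝ → ℝ) : Prop :=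
  ContDiff ℝ 2 u ∧
  (∀ t ∈ Ioo (-1 : ℝ) 1, deriv (deriv u) t = -(u t ^ p)) ∧
  u (-1) = 0 ∧ u 1 = 0 ∧
  (∀ t ∈ Ioo (-1 : ℝ) 1, 0 < u t) ∧
  (∀ t : ℝ, u (-t) = u t) ∧
  (∀ ⦃s t : ℝ⦄, s ∈ Icc (0 : ℝ) 1 → t ∈ Icc (0 : ℝ) 1 → s ≤ t → u t ≤ u s) ∧
  (∀ t ∈ Icc (-1 : ℝ) 1, u t ≤ u 0)

/-! Let `M = u(0)`. Energy conservation gives `u'(t)² / 2 ≤ M^{p+1} / (p+1)`. By concavity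
`u(t) ≥ M (1 - t)` on `[0,1]`, so integrating `u'' = -u^p` gives `|u'(1)| ≥ M^p / (p+1)`;
comparing with the energy at `t = 1` yields `M^{p-1} ≤ 2 (p+1)`. Hence `|u'| ≤ 2M`, and
`M ≤ e³` as soon as `p ≥ 4`. -/

def laneEmdenEnergy (p : ℝ) (v : ℝ → ℝ) (t : ℝ) : ℝ :=
  deriv v t ^ 2 / 2 + v t ^ (p + 1) / (p + 1)

theorem hasDerivAt_one_sub_rpow_add_one {p : ℝ} (hp : 0 ≤ p) (x : ℝ) :
    HasDerivAt (fun s : ℝ => (1 - s) ^ (p + 1)) (-((p + 1) * (1 - x) ^ p)) x := by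
  have h := (hasDerivAt_rpow_const (x := 1 - x) (p := p + 1) (Or.inr (by linarith))).comp x
    ((hasDerivAt_id x).const_sub 1)
  exact h.congr_deriv (by rw [add_sub_cancel_right]; ring)

theorem hasDerivAt_laneEmdenEnergy {p : ℝ} (hp : 0 ≤ p) {v : ℝ → ℝ} {x : ℝ}
    (hv : DifferentiableAt ℝ v x) (hv' : DifferentiableAt ℝ (deriv v) x) :
    HasDerivAt (laneEmdenEnergy p v) (deriv v x * (deriv (deriv v) x + v x ^ p)) x := by
  have hpow := (hasDerivAt_rpow_const (x := v x) (p := p + 1) (Or.inr (by linarith))).comp x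
    hv.hasDerivAt
  have h := ((hv'.hasDerivAt.pow 2).div_const 2).add (hpow.div_const (p + 1))
  refine h.congr_deriv ?_
  rw [add_sub_cancel_right]
  field_simp
  ring

theorem le_exp_three_of_rpow_sub_one_le {M p : ℝ} (hp : 4 ≤ p)
    (h : M ^ (p - 1) ≤ 2 * (p + 1)) : M ≤ exp 3 := by
  by_contra! hlt
  have hexp : exp (3 * (p - 1)) < M ^ (p - 1) := by
    rw [exp_mul]
    exact rpow_lt_rpow (exp_pos 3).le hlt (by linarith)
  linarith [add_one_le_exp (3 * (p - 1))]

namespace IsLaneEmden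

variable {p : ℝ} {v : ℝ → ℝ}

theorem differentiable (h : IsLaneEmden p v) : Differentiable ℝ v :=
  h.1.differentiable (by norm_num)

theorem differentiable_deriv (h : IsLaneEmden p v) : Differentiable ℝ (deriv v) :=
  (h.1.deriv' (n := 1)).differentiable (by norm_num)

theorem nonneg (h : IsLaneEmden p v) {t : ℝ} (ht : t ∈ Icc (-1) 1) : 0 ≤ v t := by
  obtain ⟨-, -, hv_neg_one, hv_one, hpos, -⟩ := h
  rcases ht.1.eq_or_lt with rfl | h₁
  · exact hv_neg_one.ge
  rcases ht.2.eq_or_lt with rfl | h₂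
  · exact hv_one.ge
  exact (hpos t ⟨h₁, h₂⟩).le

theorem deriv_neg (h : IsLaneEmden p v) (t : ℝ) : deriv v (-t) = -deriv v t := by
  have := deriv_comp_neg (f := v) (x := t)
  obtain ⟨-, -, -, -, -, heven, -⟩ := h
  rw [show (fun s => v (-s)) = v from funext heven] at this
  linarith

theorem deriv_zero (h : IsLaneEmden p v) : deriv v 0 = 0 := by
  have := h.deriv_neg 0
  rw [neg_zero] at this
  linarith

theorem concaveOn (h : IsLaneEmden p v) : ConcaveOn ℝ (Icc (-1) 1) v := by
  refine concaveOn_of_deriv2_nonpos (convex_Icc _ _) h.differentiable.continuous.continuousOn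
    h.differentiable.differentiableOn h.differentiable_deriv.differentiableOn fun x hx => ?_
  obtain ⟨-, hode, -, -, hpos, -⟩ := h
  rw [interior_Icc] at hx
  simp only [Function.iterate_succ, Function.iterate_zero, Function.comp_apply, id]
  rw [hode x hx, neg_nonpos]
  exact rpow_nonneg (hpos x hx).le p

theorem mul_one_sub_le (h : IsLaneEmden p v) {t : ℝ} (ht : t ∈ Icc 0 1) :
    v 0 * (1 - t) ≤ v t := by
  have := h.concaveOn.2 (x := 0) (y := 1) (by norm_num) (by norm_num) (sub_nonneg.2 ht.2) ht.1
    (by ring)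
  obtain ⟨-, -, -, hv_one, -⟩ := h
  simp only [smul_eq_mul, mul_zero, mul_one, zero_add, hv_one, add_zero] at this
  linarith

theorem deriv_one_le (h : IsLaneEmden p v) (hp : 0 ≤ p) :
    deriv v 1 ≤ -(v 0 ^ p / (p + 1)) := by
  have hode := h.2.1
  set c := v 0 ^ p / (p + 1)
  have hM : 0 ≤ v 0 := h.nonneg (by norm_num)
  have hg : ∀ x, HasDerivAt (fun s => deriv v s - c * (1 - s) ^ (p + 1))
      (deriv (deriv v) x + c * ((p + 1) * (1 - x) ^ p)) x := fun x =>
    ((h.differentiable_deriv x).hasDerivAt.sub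
      ((hasDerivAt_one_sub_rpow_add_one hp x).const_mul c)).congr_deriv (by ring)
  -- `s ↦ v'(s) - c (1 - s)^{p+1}` is antitone because `v(s)^p ≥ (v 0 (1 - s))^p`.
  have hanti : AntitoneOn (fun s => deriv v s - c * (1 - s) ^ (p + 1)) (Icc 0 1) := by
    refine antitoneOn_of_deriv_nonpos (convex_Icc 0 1)
      (fun x _ => (hg x).continuousAt.continuousWithinAt)
      (fun x _ => (hg x).differentiableAt.differentiableWithinAt) fun x hx => ?_
    rw [interior_Icc] at hx
    have hx₁ : 0 ≤ 1 - x := by linarith [hx.2]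
    have hcomp : v 0 ^ p * (1 - x) ^ p ≤ v x ^ p := by
      rw [← mul_rpow hM hx₁]
      exact rpow_le_rpow (mul_nonneg hM hx₁) (h.mul_one_sub_le ⟨hx.1.le, hx.2.le⟩) hp
    have hc : c * ((p + 1) * (1 - x) ^ p) = v 0 ^ p * (1 - x) ^ p := by
      simp only [c]
      field_simp
    rw [(hg x).deriv, hode x ⟨by linarith [hx.1], hx.2⟩, hc]
    linarith
  have := hanti (left_mem_Icc.2 zero_le_one) (right_mem_Icc.2 zero_le_one) zero_le_one
  simp only [sub_self, sub_zero, zero_rpow (by linarith : p + 1 ≠ 0), one_rpow, mul_zero,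
    mul_one, h.deriv_zero] at this
  linarith

theorem laneEmdenEnergy_eq (h : IsLaneEmden p v) (hp : 0 ≤ p) {t : ℝ} (ht : t ∈ Icc 0 1) :
    laneEmdenEnergy p v t = v 0 ^ (p + 1) / (p + 1) := by
  have hode := h.2.1
  have hE : ∀ x, HasDerivAt (laneEmdenEnergy p v)
      (deriv v x * (deriv (deriv v) x + v x ^ p)) x := fun x =>
    hasDerivAt_laneEmdenEnergy hp (h.differentiable x) (h.differentiable_deriv x)
  have hconst : ∀ x ∈ Icc (0 : ℝ) 1, laneEmdenEnergy p v x = laneEmdenEnergy p v 0 := by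
    refine constant_of_has_deriv_right_zero (fun x _ => (hE x).continuousAt.continuousWithinAt)
      fun x hx => ?_
    have := (hE x).hasDerivWithinAt (s := Ici x)
    rwa [hode x ⟨by linarith [hx.1], hx.2⟩, neg_add_cancel, mul_zero] at this
  rw [hconst t ht, laneEmdenEnergy, h.deriv_zero]
  ring

theorem sq_deriv_le (h : IsLaneEmden p v) (hp : 0 ≤ p) {t : ℝ} (ht : t ∈ Icc 0 1) :
    deriv v t ^ 2 ≤ 2 * (v 0 ^ (p + 1) / (p + 1)) := by
  have hE := h.laneEmdenEnergy_eq hp ht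
  have : 0 ≤ v t ^ (p + 1) / (p + 1) :=
    div_nonneg (rpow_nonneg (h.nonneg ⟨by linarith [ht.1], ht.2⟩) _) (by linarith)
  rw [laneEmdenEnergy] at hE
  linarith

theorem sq_deriv_one (h : IsLaneEmden p v) (hp : 0 ≤ p) :
    deriv v 1 ^ 2 = 2 * (v 0 ^ (p + 1) / (p + 1)) := by
  have hE := h.laneEmdenEnergy_eq hp (right_mem_Icc.2 zero_le_one)
  rw [laneEmdenEnergy, h.2.2.2.1, zero_rpow (by linarith), zero_div, add_zero] at hE
  linarith

theorem rpow_sub_one_le (h : IsLaneEmden p v) (hp : 0 ≤ p) :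
    v 0 ^ (p - 1) ≤ 2 * (p + 1) := by
  have hM : 0 < v 0 := h.2.2.2.2.1 0 (by norm_num)
  set a := v 0 ^ (p - 1)
  have ha : 0 < a := rpow_pos_of_pos hM _
  have hMp : v 0 ^ p = a * v 0 := by rw [← rpow_add_one hM.ne', sub_add_cancel]
  have hMp1 : v 0 ^ (p + 1) = a * v 0 * v 0 := by rw [rpow_add_one hM.ne', hMp]
  have hslope : (v 0 ^ p / (p + 1)) ^ 2 ≤ deriv v 1 ^ 2 := by
    have := h.deriv_one_le hp
    nlinarith [div_nonneg (rpow_nonneg hM.le p) (by linarith : (0 : ℝ) ≤ p + 1)]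
  rw [h.sq_deriv_one hp, hMp, hMp1] at hslope
  field_simp at hslope
  linarith

theorem abs_deriv_le (h : IsLaneEmden p v) (hp : 0 ≤ p) {t : ℝ} (ht : t ∈ Icc (-1) 1) :
    |deriv v t| ≤ 2 * v 0 := by
  have hM : 0 < v 0 := h.2.2.2.2.1 0 (by norm_num)
  have hMp1 : v 0 ^ (p + 1) = v 0 ^ (p - 1) * v 0 ^ 2 := by
    rw [← rpow_natCast, ← rpow_add hM]
    congr 1
    ring
  have hbound : ∀ s ∈ Icc (0 : ℝ) 1, |deriv v s| ≤ 2 * v 0 := fun s hs => by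
    refine abs_le_of_sq_le_sq ?_ (by positivity)
    calc deriv v s ^ 2 ≤ 2 * (v 0 ^ (p + 1) / (p + 1)) := h.sq_deriv_le hp hs
      _ = 2 * v 0 ^ 2 * (v 0 ^ (p - 1) / (p + 1)) := by rw [hMp1]; ring
      _ ≤ 2 * v 0 ^ 2 * 2 := by
        gcongr
        rw [div_le_iff₀ (by linarith)]
        linarith [h.rpow_sub_one_le hp]
      _ = (2 * v 0) ^ 2 := by ring
  rcases le_total 0 t with ht₀ | ht₀
  · exact hbound t ⟨ht₀, ht.2⟩
  · simpa only [h.deriv_neg, abs_neg] using hbound (-t) ⟨by linarith, by linarith [ht.1]⟩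

end IsLaneEmden

/-- Uniform bound on `|u_p'|` on `[-1,1]` for all large `p`. -/
theorem deriv_uniformly_bounded
    (u : ℝ → ℝ → ℝ) (hu : ∀ p : ℝ, 1 < p → IsLaneEmden p (u p)) :
    ∃ C > (0 : ℝ), ∃ p₀ > (1 : ℝ), ∀ p ≥ p₀, ∀ t ∈ Icc (-1 : ℝ) 1,
      |deriv (u p) t| ≤ C := by
  refine ⟨2 * exp 3, by positivity, 4, by norm_num, fun p hp t ht => ?_⟩
  have h := hu p (by linarith)
  calc |deriv (u p) t| ≤ 2 * u p 0 := h.abs_deriv_le (by linarith) ht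
    _ ≤ 2 * exp 3 := by
      gcongr
      exact le_exp_three_of_rpow_sub_one_le hp
        (h.rpow_sub_one_le (by linarith))
end
end

section
/- There exists p₀ > 1 such that for all p ≥ p₀ the first eigenvalue α₁(p) satisfies -1 < α₁(p)·μ_p² < 0, where μ_p = (p‖u_p‖_∞^{p-1})^{-1/2}; in particular -p‖u_p‖_∞^{p-1} < α₁(p) < 0 for all p large. -/
open Real Set Filter Topology

noncomputable section

/-- `α` is the first eigenvalue of the linearized operator `-d²/dt² - p u^(p-1)`
with Dirichlet boundary conditions on `(-1,1)`, characterized by the existence of a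
positive eigenfunction. -/
def IsFirstEig (p : ℝ) (u : ℝ → ℝ) (α : ℝ) : Prop :=
  ∃ w : ℝ → ℝ, ContDiff ℝ 2 w ∧
    (∀ t ∈ Ioo (-1 : ℝ) 1, 0 < w t) ∧
    w (-1) = 0 ∧ w 1 = 0 ∧
    (∀ t ∈ Ioo (-1 : ℝ) 1, -(deriv (deriv w) t) - p * u t ^ (p - 1) * w t = α * w t)

/-- The rescaling parameter `μ_p = (p ‖u_p‖_∞^(p-1))^(-1/2)`. -/
def mup (u : ℝ → ℝ → ℝ) (p : ℝ) : ℝ := (p * u p 0 ^ (p - 1)) ^ (-(1 / 2) : ℝ)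

/-- The rescaled function `ũ_p(s) = p (u_p(μ_p s) - u_p(0)) / u_p(0)`. -/
def utilde (u : ℝ → ℝ → ℝ) (p : ℝ) (s : ℝ) : ℝ :=
  p * (u p (mup u p * s) - u p 0) / u p 0

/-- The limit profile `W(s) = log( 4 e^{√2 s} / (1 + e^{√2 s})² )`. -/
def W (s : ℝ) : ℝ :=
  Real.log (4 * Real.exp (Real.sqrt 2 * s) / (1 + Real.exp (Real.sqrt 2 * s)) ^ 2)

/-!
The bounds hold for every `p > 1`. Differentiating the Wronskian `u w' - u' w` of the
Lane–Emden solution `u` and the positive eigenfunction `w`, and integrating over `[-1, 1]`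
where both vanish at the ends, gives `α ∫ u w = -(p - 1) ∫ u^(p-1) u w`. Positivity of `u` and `w`
forces `α < 0`, and `u^(p-1) ≤ ‖u‖_∞^(p-1)` gives
`α ≥ -(p - 1) ‖u‖_∞^(p-1) > -p ‖u‖_∞^(p-1)`.
-/

theorem ContDiff.hasDerivAt_deriv {f : ℝ → ℝ} (hf : ContDiff ℝ 2 f) (t : ℝ) :
    HasDerivAt (deriv f) (deriv (deriv f) t) t :=
  ((hf.deriv' (n := 1)).differentiable one_ne_zero t).hasDerivAt

theorem hasDerivAt_wronskian {f g : ℝ → ℝ} (hf : ContDiff ℝ 2 f) (hg : ContDiff ℝ 2 g) (t : ℝ) :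
    HasDerivAt (fun s => f s * deriv g s - deriv f s * g s)
      (f t * deriv (deriv g) t - deriv (deriv f) t * g t) t := by
  have hf' := (hf.differentiable two_ne_zero t).hasDerivAt
  have hg' := (hg.differentiable two_ne_zero t).hasDerivAt
  exact ((hf'.mul (hg.hasDerivAt_deriv t)).sub ((hf.hasDerivAt_deriv t).mul hg')).congr_deriv
    (by ring)

theorem integral_sub_mul_mul_eq_zero_of_ode {f g V Q : ℝ → ℝ} {a b : ℝ} (hab : a ≤ b)
    (hf : ContDiff ℝ 2 f) (hg : ContDiff ℝ 2 g)
    (hV : ContinuousOn V (Icc a b)) (hQ : ContinuousOn Q (Icc a b))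
    (hfa : f a = 0) (hfb : f b = 0) (hga : g a = 0) (hgb : g b = 0)
    (hf'' : ∀ t ∈ Ioo a b, deriv (deriv f) t = -(V t * f t))
    (hg'' : ∀ t ∈ Ioo a b, deriv (deriv g) t = -(Q t * g t)) :
    ∫ t in a..b, (V t - Q t) * (f t * g t) = 0 := by
  have hint : IntervalIntegrable (fun t => (V t - Q t) * (f t * g t)) MeasureTheory.volume a b :=
    ((hV.sub hQ).mul (hf.continuous.mul hg.continuous).continuousOn).intervalIntegrable_of_Icc hab
  have hcont : ContinuousOn (fun s => f s * deriv g s - deriv f s * g s) (Icc a b) :=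
    ((hf.continuous.mul (hg.continuous_deriv one_le_two)).sub
      ((hf.continuous_deriv one_le_two).mul hg.continuous)).continuousOn
  rw [intervalIntegral.integral_eq_sub_of_hasDerivAt_of_le hab hcont (fun t ht => ?_) hint]
  · simp [hfa, hfb, hga, hgb]
  · refine (hasDerivAt_wronskian hf hg t).congr_deriv ?_
    rw [hf'' t ht, hg'' t ht]
    ring

theorem eigenvalue_mem_Ioo_of_ode {U w V : ℝ → ℝ} {a b p M α : ℝ} (hab : a < b) (hp : 1 < p)
    (hU : ContDiff ℝ 2 U) (hw : ContDiff ℝ 2 w) (hV : ContinuousOn V (Icc a b))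
    (hUa : U a = 0) (hUb : U b = 0) (hwa : w a = 0) (hwb : w b = 0)
    (hUpos : ∀ t ∈ Ioo a b, 0 < U t) (hwpos : ∀ t ∈ Ioo a b, 0 < w t)
    (hVpos : ∀ t ∈ Ioo a b, 0 < V t) (hVM : ∀ t ∈ Ioo a b, V t ≤ M)
    (hU'' : ∀ t ∈ Ioo a b, deriv (deriv U) t = -(V t * U t))
    (hw'' : ∀ t ∈ Ioo a b, -deriv (deriv w) t - p * V t * w t = α * w t) :
    -(p * M) < α ∧ α < 0 := by
  have hUw : Continuous fun t => U t * w t := hU.continuous.mul hw.continuous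
  have hUwi : IntervalIntegrable (fun t => U t * w t) MeasureTheory.volume a b :=
    hUw.continuousOn.intervalIntegrable_of_Icc hab.le
  have hB := intervalIntegral.intervalIntegral_pos_of_pos_on hUwi
    (fun t ht => mul_pos (hUpos t ht) (hwpos t ht)) hab
  have hVUw : IntervalIntegrable (fun t => V t * (U t * w t)) MeasureTheory.volume a b :=
    (hV.mul hUw.continuousOn).intervalIntegrable_of_Icc hab.le
  have hA := intervalIntegral.intervalIntegral_pos_of_pos_on hVUw
    (fun t ht => mul_pos (hVpos t ht) (mul_pos (hUpos t ht) (hwpos t ht))) hab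
  have hAB : ∫ t in a..b, V t * (U t * w t) ≤ M * ∫ t in a..b, U t * w t := by
    rw [← intervalIntegral.integral_const_mul]
    refine intervalIntegral.integral_mono_on_of_le_Ioo hab.le hVUw (hUwi.const_mul M)
      fun t ht => ?_
    exact mul_le_mul_of_nonneg_right (hVM t ht) (mul_pos (hUpos t ht) (hwpos t ht)).le
  have hM : 0 < M := by
    obtain ⟨t, ht⟩ := nonempty_Ioo.mpr hab
    exact (hVpos t ht).trans_le (hVM t ht)
  -- the eigenvalue equation reads `w'' = -(p V + α) w`
  have hgreen := integral_sub_mul_mul_eq_zero_of_ode hab.le hU hw hV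
    ((continuousOn_const.mul hV).add continuousOn_const) hUa hUb hwa hwb hU''
    (Q := fun t => p * V t + α) fun t ht => by linarith [hw'' t ht]
  have hidentity : α * ∫ t in a..b, U t * w t = (1 - p) * ∫ t in a..b, V t * (U t * w t) := by
    have hsplit : ∀ t, (V t - (p * V t + α)) * (U t * w t)
        = (1 - p) * (V t * (U t * w t)) - α * (U t * w t) := fun t => by ring
    simp only [hsplit] at hgreen
    rw [intervalIntegral.integral_sub (hVUw.const_mul _) (hUwi.const_mul _),
      intervalIntegral.integral_const_mul, intervalIntegral.integral_const_mul] at hgreen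
    linarith
  constructor <;> nlinarith

theorem IsFirstEig.neg_lt_and_lt_zero {p : ℝ} {u : ℝ → ℝ} {α : ℝ} (hp : 1 < p)
    (hu : IsLaneEmden p u) (hα : IsFirstEig p u α) :
    -(p * u 0 ^ (p - 1)) < α ∧ α < 0 := by
  obtain ⟨hu2, hode, hu_neg_one, hu_one, hupos, -, -, humax⟩ := hu
  obtain ⟨w, hw2, hwpos, hw_neg_one, hw_one, heig⟩ := hα
  refine eigenvalue_mem_Ioo_of_ode (V := fun t => u t ^ (p - 1)) (by norm_num) hp hu2 hw2
    (hu2.continuous.rpow_const fun _ => Or.inr (by linarith)).continuousOn hu_neg_one hu_one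
    hw_neg_one hw_one hupos hwpos (fun t ht => rpow_pos_of_pos (hupos t ht) _)
    (fun t ht => rpow_le_rpow (hupos t ht).le (humax t (Ioo_subset_Icc_self ht)) (by linarith))
    (fun t ht => ?_) (fun t ht => by simpa [mul_assoc] using heig t ht)
  rw [hode t ht, ← rpow_add_one (hupos t ht).ne', sub_add_cancel]

theorem mup_sq {u : ℝ → ℝ → ℝ} {p : ℝ} (h : 0 ≤ p * u p 0 ^ (p - 1)) :
    mup u p ^ 2 = (p * u p 0 ^ (p - 1))⁻¹ := by
  rw [mup, ← rpow_natCast, ← rpow_mul h, ← rpow_neg_one]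
  norm_num

/-- For `p` large, `-1 < α₁(p) μ_p² < 0`; in particular
`-p ‖u_p‖_∞^(p-1) < α₁(p) < 0`. -/
theorem first_eigenvalue_rescaled_bounds
    (u : ℝ → ℝ → ℝ) (α : ℝ → ℝ)
    (hu : ∀ p : ℝ, 1 < p → IsLaneEmden p (u p))
    (hα : ∀ p : ℝ, 1 < p → IsFirstEig p (u p) (α p)) :
    ∃ p₀ > (1 : ℝ), ∀ p ≥ p₀,
      (-1 < α p * (mup u p) ^ 2 ∧ α p * (mup u p) ^ 2 < 0) ∧
      (-(p * u p 0 ^ (p - 1)) < α p ∧ α p < 0) := by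
  refine ⟨2, one_lt_two, fun p hp => ?_⟩
  have hp1 : 1 < p := one_lt_two.trans_le hp
  obtain ⟨hlower, hneg⟩ := (hα p hp1).neg_lt_and_lt_zero hp1 (hu p hp1)
  obtain ⟨-, -, -, -, hupos, -⟩ := hu p hp1
  have hc : 0 < p * u p 0 ^ (p - 1) :=
    mul_pos (by linarith) (rpow_pos_of_pos (hupos 0 (by norm_num)) _)
  rw [mup_sq hc.le, ← div_eq_mul_inv, lt_div_iff₀ hc, div_neg_iff]
  exact ⟨⟨by linarith, Or.inr ⟨hneg, hc⟩⟩, hlower, hneg⟩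
end
end
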